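/- arXiv:2211.06922 — 2 statements merged into one kernel-verified Lean document; each statement's English description precedes it below -/
import Mathlib

section
/- In the setting of formal series rings P_t over a Noetherian O-algebra R indexed by totally positive elements of fractional ideals, define operators on coefficient systems r^t : (d⁻¹n⁻¹J_t)₊ ∪ {0} → D ⊗ R indexed by ideles t, by (T_p f)-coefficients r_m^t(T_p f) = χ_m(ϖ_p) r_{ϖ_p m}^{x⁻¹t}(f) + χ_{k+m−1}(ϖ_p) r_{ϖ_p⁻¹ m}^{x t}(S_{ϖ_p} f), and similarly for a second prime q with uniformizer ϖ_q, y = ϖ_q^{(p)}. Assume S_{ϖ_p} commutes with T_q and with S_{ϖ_q}. Then T_p(T_q f) and T_q(T_p f) have identical coefficient systems: r_m^t(T_p T_q f) = r_m^t(T_q T_p f) for all t, m. -/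
/-- Commutativity of the Hecke operators `T_p`, `T_q` on `q`-expansion
coefficient systems: if the coefficients `r^t_m` of `T_p f` and `T_q f` satisfy the
recursion of Proposition 5.7.2 (with scalars `a = χ_m(ϖ_p)`, `b = χ_{k+m−1}(ϖ_p)`,
`a' = χ_m(ϖ_q)`, `b' = χ_{k+m−1}(ϖ_q)`, idele shifts `x, y` and exponent shifts
`ϖ_p, ϖ_q`), and the diamond operators `S_{ϖ_p}`, `S_{ϖ_q}` commute with `T_q`, `T_p`
and with each other, then `T_p(T_q f)` and `T_q(T_p f)` have identical coefficient
systems: `r^t_m(T_pT_q f) = r^t_m(T_qT_p f)` for all `t, m, f`. -/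
theorem stmt6 (R : Type*) [CommRing R]
    (Mod C : Type*) [AddCommGroup Mod] [AddCommGroup C] [Module R C]
    (T : Type*) [CommGroup T]
    (Exp : Type*) (W : Type*) [CommGroup W] [MulAction W Exp]
    (r : T → Exp → Mod → C)
    (Tp Tq Sp Sq : Mod → Mod)
    (x y : T) (ϖp ϖq : W)
    (a b a' b' : R)
    (hp : ∀ f t m, r t m (Tp f) =
      a • r (x⁻¹ * t) (ϖp • m) f + b • r (x * t) (ϖp⁻¹ • m) (Sp f))
    (hq : ∀ f t m, r t m (Tq f) =
      a' • r (y⁻¹ * t) (ϖq • m) f + b' • r (y * t) (ϖq⁻¹ • m) (Sq f))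
    (hSpTq : ∀ f, Sp (Tq f) = Tq (Sp f))
    (hSqTp : ∀ f, Sq (Tp f) = Tp (Sq f))
    (hSpSq : ∀ f, Sp (Sq f) = Sq (Sp f)) :
    ∀ f t m, r t m (Tp (Tq f)) = r t m (Tq (Tp f)) := by
  intro f t m
  rw [hp, hq, hq, hp, hSpTq, hSqTp, hq, hp, hSpSq]
  simp only [smul_add, smul_smul, ← mul_smul]
  rw [mul_comm a' a, mul_comm b' a, mul_comm a' b, mul_comm b' b,
    mul_left_comm y⁻¹ x⁻¹ t, mul_left_comm y x⁻¹ t, mul_left_comm y⁻¹ x t, mul_left_comm y x t, mul_comm ϖq ϖp, mul_comm ϖq⁻¹ ϖp, mul_comm ϖq ϖp⁻¹, mul_comm ϖq⁻¹ ϖp⁻¹]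
  abel
end

section
/- Let A ⊆ B be commutative monoids (written additively, cancellative, torsion-free) such that B is the disjoint union of finitely many translates b₁ + A, …, b_r + A with b₁ = 0. Then for any commutative ring R, the monoid algebra R[B] is a free R[A]-module with basis X^{b₁}, …, X^{b_r}, and the trace of the R[A]-linear endomorphism 'multiplication by X^b' (b ∈ B) equals r·X^b if b ∈ A, and equals Σ over those j with b + b_j ∈ b_j + A of X^{b + b_j − b_j} in general; in particular if b + b_j ∈ b_j + A only when b ∈ A, the trace map Tr : R[B] → R[A] satisfies Tr(Σ_{b∈B} r_b X^b) = r · Σ_{a∈A} r_a X^a. -/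
/-!
Because `B` is the disjoint union of the translates `b_j + A`, an element `g ∈ R[B]` regroups
uniquely as `g = ∑ⱼ X^{b_j} gⱼ` with `gⱼ ∈ R[A]`, `gⱼ(a) = g(b_j + a)`; this identifies `R[B]`
with `R[A]^r`, compatibly with multiplication by `R[A]`. The `j`-th diagonal entry of
multiplication by `f` then has `a`-coefficient `(f X^{b_j})(b_j + a) = f(a)` by cancellation,
so the trace has `a`-coefficient `r • f(a)`.
-/

open Function

namespace AddMonoidAlgebra

section Translates

variable (R : Type*) [CommSemiring R] {A B ι : Type*} [AddCommMonoid A] [AddCommMonoid B]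
  {φ : A →+ B} {b : ι → B} (hb : Bijective fun p : ι × A => b p.1 + φ p.2)

noncomputable def coeffTranslatesEquiv : R[B] ≃ₗ[R] (ι →₀ R[A]) :=
  (coeffLinearEquiv R).trans <| (Finsupp.domLCongr (Equiv.ofBijective _ hb).symm).trans <|
    (Finsupp.curryLinearEquiv R).trans (Finsupp.mapRange.linearEquiv (coeffLinearEquiv R).symm)

theorem coeff_coeffTranslatesEquiv (g : R[B]) (i : ι) (a : A) :
    (coeffTranslatesEquiv R hb g i).coeff a = g.coeff (b i + φ a) := by
  simp [coeffTranslatesEquiv]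

theorem coeffTranslatesEquiv_single (i : ι) (a : A) (c : R) :
    coeffTranslatesEquiv R hb (single (b i + φ a) c) = Finsupp.single i (single a c) := by
  classical
  ext j a'
  rw [coeff_coeffTranslatesEquiv, coeff_single, Finsupp.single_apply]
  have key : b i + φ a = b j + φ a' ↔ (i, a) = (j, a') :=
    hb.1.eq_iff (a := (i, a)) (b := (j, a'))
  rw [Prod.mk.injEq] at key
  by_cases hij : i = j
  · subst hij; simp [key, Finsupp.single_apply]
  · simp [key, hij]

variable [Algebra R[A] R[B]] (hφ : algebraMap R[A] R[B] = mapDomainRingHom R φ)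
include hφ

theorem coeffTranslatesEquiv_smul (p : R[A]) (g : R[B]) :
    coeffTranslatesEquiv R hb (p • g) = p • coeffTranslatesEquiv R hb g := by
  rw [Algebra.smul_def, hφ]
  induction p using induction_linear with
  | zero => simp
  | add p₁ p₂ h₁ h₂ => simp only [map_add, add_mul, h₁, h₂, add_smul]
  | single a₁ c =>
    induction g using induction_linear with
    | zero => simp
    | add g₁ g₂ h₁ h₂ => simp only [mul_add, map_add, h₁, h₂, smul_add]
    | single x d =>
      obtain ⟨⟨i, a⟩, rfl⟩ := hb.2 x
      have hx : φ a₁ + (b i + φ a) = b i + φ (a₁ + a) := by rw [map_add, add_left_comm]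
      rw [mapDomainRingHom_apply, mapDomain_single, single_mul_single, hx,
        coeffTranslatesEquiv_single, coeffTranslatesEquiv_single, Finsupp.smul_single,
        smul_eq_mul, single_mul_single]

noncomputable def basisOfTranslates : Module.Basis ι R[A] R[B] :=
  .ofRepr { coeffTranslatesEquiv R hb with map_smul' := coeffTranslatesEquiv_smul R hb hφ }

theorem coeff_basisOfTranslates_repr (g : R[B]) (i : ι) (a : A) :
    ((basisOfTranslates R hb hφ).repr g i).coeff a = g.coeff (b i + φ a) :=
  coeff_coeffTranslatesEquiv R hb g i a

theorem basisOfTranslates_apply (i : ι) : basisOfTranslates R hb hφ i = single (b i) 1 := by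
  apply (basisOfTranslates R hb hφ).repr.injective
  have h := coeffTranslatesEquiv_single R hb i 0 (1 : R)
  rw [map_zero, add_zero] at h
  rw [Module.Basis.repr_self, one_def]
  exact h.symm

end Translates

theorem coeff_trace_of_translates {R A B ι : Type*} [CommRing R] [AddCommMonoid A]
    [AddCommMonoid B] [IsCancelAdd B] [Fintype ι] {φ : A →+ B} {b : ι → B}
    (hb : Bijective fun p : ι × A => b p.1 + φ p.2) [Algebra R[A] R[B]]
    (hφ : algebraMap R[A] R[B] = mapDomainRingHom R φ) (f : R[B]) (a : A) :
    (Algebra.trace R[A] R[B] f).coeff a = Fintype.card ι • f.coeff (φ a) := by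
  classical
  let basis := basisOfTranslates R hb hφ
  have diagonal (i : ι) : (basis.repr (f * basis i) i).coeff a = f.coeff (φ a) := by
    rw [coeff_basisOfTranslates_repr, basisOfTranslates_apply, add_comm, coeff_mul_single_add,
      mul_one]
  rw [Algebra.trace_eq_matrix_trace basis, Matrix.trace]
  simp only [Matrix.diag, Algebra.leftMulMatrix_eq_repr_mul, coeff_sum, Finsupp.finsetSum_apply,
    diagonal, Finset.sum_const, Finset.card_univ]

end AddMonoidAlgebra

theorem AddSubmonoid.bijective_add_inclusion_of_existsUnique {V ι : Type*} [AddMonoid V]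
    [IsLeftCancelAdd V] {A B : AddSubmonoid V} (hAB : A ≤ B) {b : ι → V} (hb : ∀ j, b j ∈ B)
    (hpart : ∀ x ∈ B, ∃! j, ∃ a ∈ A, x = b j + a) :
    Bijective fun p : ι × A => (⟨b p.1, hb p.1⟩ : B) + inclusion hAB p.2 := by
  constructor
  · rintro ⟨i, a⟩ ⟨j, a'⟩ h
    have hv : b i + a = b j + a' := congrArg Subtype.val h
    obtain rfl : i = j :=
      (hpart _ (B.add_mem (hb i) (hAB a.2))).unique ⟨a, a.2, rfl⟩ ⟨a', a'.2, hv⟩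
    rw [Subtype.ext (add_left_cancel hv)]
  · rintro ⟨x, hx⟩
    obtain ⟨j, ⟨a, ha, rfl⟩, -⟩ := hpart x hx
    exact ⟨(j, ⟨a, ha⟩), rfl⟩

theorem stmt10_general (R : Type*) [CommRing R] (V : Type*) [AddCancelCommMonoid V]
    (A B : AddSubmonoid V) (hAB : A ≤ B) (r : ℕ)
    (b : Fin r → V) (hb : ∀ j, b j ∈ B)
    (hpart : ∀ x ∈ B, ∃! j : Fin r, ∃ a ∈ A, x = b j + a) :
    letI : Algebra (AddMonoidAlgebra R A) (AddMonoidAlgebra R B) :=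
      (AddMonoidAlgebra.mapDomainRingHom R (AddSubmonoid.inclusion hAB)).toAlgebra
    ∀ f : AddMonoidAlgebra R B, ∀ a : A,
      (Algebra.trace (AddMonoidAlgebra R A) (AddMonoidAlgebra R B) f).coeff a =
        r • f.coeff (AddSubmonoid.inclusion hAB a) := by
  let : Algebra (AddMonoidAlgebra R A) (AddMonoidAlgebra R B) :=
    (AddMonoidAlgebra.mapDomainRingHom R (AddSubmonoid.inclusion hAB)).toAlgebra
  intro f a
  have hφ : algebraMap (AddMonoidAlgebra R A) (AddMonoidAlgebra R B) =
      AddMonoidAlgebra.mapDomainRingHom R (AddSubmonoid.inclusion hAB) := rfl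
  simpa only [Fintype.card_fin] using
    AddMonoidAlgebra.coeff_trace_of_translates (φ := AddSubmonoid.inclusion hAB)
      (b := fun j => (⟨b j, hb j⟩ : B))
      (AddSubmonoid.bijective_add_inclusion_of_existsUnique hAB hb hpart) hφ f a

/-- (The saving trace on `q`-expansions, monoid-algebra core.)
Let `A ⊆ B` be cancellative commutative monoids with `B` the disjoint union of finitely
many translates `b_1 + A, …, b_r + A`, `b_1 = 0`.  Then `R[B]` is free over `R[A]` with
basis the `X^{b_j}`, and if moreover `x + b_j ∈ b_j + A` happens only when `x ∈ A`, the
trace map `Tr : R[B] → R[A]` of this finite free extension satisfies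
`Tr(Σ_{x ∈ B} r_x X^x) = r · Σ_{a ∈ A} r_a X^a`, i.e. coefficientwise
`(Tr f)(a) = r · f(a)` for all `a ∈ A`. -/
theorem stmt10 (R : Type*) [CommRing R] (V : Type*) [AddCancelCommMonoid V]
    (A B : AddSubmonoid V) (hAB : A ≤ B) (r : ℕ) (hr : 0 < r)
    (b : Fin r → V) (hb : ∀ j, b j ∈ B) (hb0 : ∀ h : 0 < r, b ⟨0, h⟩ = 0)
    (hpart : ∀ x ∈ B, ∃! j : Fin r, ∃ a ∈ A, x = b j + a)
    (hcond : ∀ x ∈ B, ∀ j : Fin r, (∃ a ∈ A, x + b j = b j + a) → x ∈ A) :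
    letI : Algebra (AddMonoidAlgebra R A) (AddMonoidAlgebra R B) :=
      (AddMonoidAlgebra.mapDomainRingHom R (AddSubmonoid.inclusion hAB)).toAlgebra
    ∀ f : AddMonoidAlgebra R B, ∀ a : A,
      (Algebra.trace (AddMonoidAlgebra R A) (AddMonoidAlgebra R B) f).coeff a =
        r • f.coeff (AddSubmonoid.inclusion hAB a) :=
  stmt10_general R V A B hAB r b hb hpart
end
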